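/- Let n ≥ 1, let c = 1/(n+1), and let X_1, ..., X_n be i.i.d. random variables with P(X_1 = 1) = 1/(n+1) = 1 - P(X_1 = 0). With Y_i = X_i - i·c, one has M(Y_1,...,Y_n) - V(Y_1,...,Y_n) = (n-1)·(1 - 1/(n+1))^n/(n+1); that is, the upper bound of the prophet inequality for fixed horizon n is attained. -/

import Mathlib

open MeasureTheory ProbabilityTheory

/-- The σ-algebra generated by `Y 1, ..., Y i`. -/
def priorSigma {Ω : Type*} (Y : ℕ → Ω → ℝ) (i : ℕ) : MeasurableSpace Ω :=
  ⨆ j ∈ Finset.Icc 1 i, MeasurableSpace.comap (Y j) Real.measurableSpace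

/-- `τ` is a stopping rule for `Y 1, ..., Y n`: it takes values in `{1, ..., n}` and
each event `{τ = i}` depends only on `Y 1, ..., Y i`. -/
def IsStopRule {Ω : Type*} (Y : ℕ → Ω → ℝ) (n : ℕ) (τ : Ω → ℕ) : Prop :=
  (∀ ω, τ ω ∈ Finset.Icc 1 n) ∧
  ∀ i ∈ Finset.Icc 1 n, MeasurableSet[priorSigma Y i] {ω | τ ω = i}

/-- `V(Y_1,...,Y_n) = sup_τ E(Y_τ)`: the optimal expected return of the statistician. -/
noncomputable def Vn {Ω : Type*} [MeasurableSpace Ω] (μ : Measure Ω)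
    (Y : ℕ → Ω → ℝ) (n : ℕ) : ℝ :=
  sSup {r | ∃ τ, IsStopRule Y n τ ∧ r = ∫ ω, Y (τ ω) ω ∂μ}

/-- `M(Y_1,...,Y_n) = E(max_{1 ≤ i ≤ n} Y_i)`: the expected return of the prophet. -/
noncomputable def Mn {Ω : Type*} [MeasurableSpace Ω] (μ : Measure Ω)
    (Y : ℕ → Ω → ℝ) (n : ℕ) : ℝ :=
  ∫ ω, sSup ((fun i => Y i ω) '' Set.Icc 1 n) ∂μ

/-! With `c = p = 1/(n+1)` the game is fair. Stopping at once gives `E Y₁ = p - c = 0`, and for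
any stopping rule `E X_τ ≤ p E τ`, because `{τ > k}` only depends on `X₁, …, X_k`, which are
independent of `X_{k+1}`; so `E Y_τ = E X_τ - c E τ ≤ 0` and `V = 0`. The prophet's maximum is
`1 - i c` when the first success is at `i` and `-c` when there is none, which gives
`M = -c + ∑_{k<n} (1-p)^k p (1 - k c) = (n-1)(1-p)^n p`. -/

open Finset

section priorSigma

variable {Ω : Type*}

lemma comap_sub_const (f : Ω → ℝ) (a : ℝ) :
    MeasurableSpace.comap (fun ω => f ω - a) Real.measurableSpace =
      MeasurableSpace.comap f Real.measurableSpace := by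
  rw [show (fun ω => f ω - a) = (MeasurableEquiv.subRight a) ∘ f from rfl,
    ← MeasurableSpace.comap_comp, (MeasurableEquiv.subRight a).measurableEmbedding.comap_eq]

lemma priorSigma_sub_const {X Y : ℕ → Ω → ℝ} (a : ℕ → ℝ) (hY : ∀ i ω, Y i ω = X i ω - a i) :
    priorSigma Y = priorSigma X := by
  have hY' : Y = fun i ω => X i ω - a i := funext fun i => funext (hY i)
  funext k
  simp only [priorSigma, hY', comap_sub_const]

lemma isStopRule_sub_const {X Y : ℕ → Ω → ℝ} (a : ℕ → ℝ) (hY : ∀ i ω, Y i ω = X i ω - a i)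
    {n : ℕ} {τ : Ω → ℕ} : IsStopRule Y n τ ↔ IsStopRule X n τ := by
  rw [IsStopRule, IsStopRule, priorSigma_sub_const a hY]

lemma priorSigma_mono (X : ℕ → Ω → ℝ) : Monotone (priorSigma X) := fun _ _ hkl =>
  biSup_mono fun j hj => by simp only [mem_Icc] at hj ⊢; omega

lemma comap_le_priorSigma (X : ℕ → Ω → ℝ) {j k : ℕ} (hj : j ∈ Icc 1 k) :
    MeasurableSpace.comap (X j) Real.measurableSpace ≤ priorSigma X k :=
  le_iSup₂ (f := fun j (_ : j ∈ Icc 1 k) => MeasurableSpace.comap (X j) Real.measurableSpace) j hj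

lemma measurable_prod_one_sub_priorSigma (X : ℕ → Ω → ℝ) (k : ℕ) :
    Measurable[priorSigma X k] fun ω => ∏ j ∈ Icc 1 k, (1 - X j ω) :=
  Finset.measurable_prod _ fun _ hj =>
    measurable_const.sub (Measurable.of_comap_le (comap_le_priorSigma X hj))

variable [MeasurableSpace Ω] {X : ℕ → Ω → ℝ}

lemma priorSigma_le (hmeas : ∀ i, Measurable (X i)) (k : ℕ) :
    priorSigma X k ≤ ‹MeasurableSpace Ω› :=
  iSup₂_le fun j _ => (hmeas j).comap_le

variable {μ : Measure Ω} {n : ℕ}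

lemma indep_priorSigma_comap_succ (hmeas : ∀ i, Measurable (X i))
    (hindep : iIndepFun (fun i : Fin n => X (i.1 + 1)) μ) {k : ℕ} (hk : k < n) :
    Indep (priorSigma X k) (MeasurableSpace.comap (X (k + 1)) Real.measurableSpace) μ := by
  have h := indep_iSup_of_disjoint (fun i => (hmeas _).comap_le) hindep.iIndep
    (S := {i : Fin n | i.1 < k}) (T := {⟨k, hk⟩}) (by simp)
  simp only [Set.mem_singleton_iff, iSup_iSup_eq_left] at h
  refine indep_of_indep_of_le_left h (iSup₂_le fun j hj => ?_)
  obtain ⟨hj1, hjk⟩ := mem_Icc.1 hj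
  have hidx : ((⟨j - 1, by omega⟩ : Fin n) : ℕ) + 1 = j := by simp only; omega
  exact le_iSup₂_of_le (f := fun (i : Fin n) (_ : i ∈ {i : Fin n | i.1 < k}) =>
    MeasurableSpace.comap (X (i.1 + 1)) Real.measurableSpace) ⟨j - 1, by omega⟩
    (by simp only [Set.mem_ofPred_eq]; omega) (by rw [hidx])

lemma indepFun_of_measurable_priorSigma (hmeas : ∀ i, Measurable (X i))
    (hindep : iIndepFun (fun i : Fin n => X (i.1 + 1)) μ) {k : ℕ} (hk : k < n) {f : Ω → ℝ}
    (hf : Measurable[priorSigma X k] f) {g : ℝ → ℝ} (hg : Measurable g) :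
    IndepFun f (fun ω => g (X (k + 1) ω)) μ := by
  rw [IndepFun_iff_Indep]
  exact indep_of_indep_of_le_right
    (indep_of_indep_of_le_left (indep_priorSigma_comap_succ hmeas hindep hk) hf.comap_le)
    (hg.comp (comap_measurable (X (k + 1)))).comap_le

end priorSigma

namespace IsStopRule

variable {Ω : Type*} {X : ℕ → Ω → ℝ} {n : ℕ} {τ : Ω → ℕ}

lemma measurableSet_lt (hτ : IsStopRule X n τ) {k : ℕ} (hk : k ≤ n) :
    MeasurableSet[priorSigma X k] {ω | k < τ ω} := by
  have h : {ω | k < τ ω} = (⋃ i ∈ Icc 1 k, {ω | τ ω = i})ᶜ := by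
    ext ω
    have := mem_Icc.1 (hτ.1 ω)
    simp only [Set.mem_ofPred_eq, Set.mem_compl_iff, Set.mem_iUnion, mem_Icc, not_exists]
    constructor
    · rintro h i ⟨-, hik⟩ rfl; omega
    · intro h; by_contra! hle; exact h (τ ω) ⟨this.1, hle⟩ rfl
  rw [h]
  refine (Finset.measurableSet_biUnion _ fun i hi => ?_).compl
  obtain ⟨hi1, hik⟩ := mem_Icc.1 hi
  exact priorSigma_mono X hik _ (hτ.2 i (mem_Icc.2 ⟨hi1, hik.trans hk⟩))

lemma cast_eq_sum_indicator (hτ : IsStopRule X n τ) (ω : Ω) :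
    (τ ω : ℝ) = ∑ k ∈ range n, {ω | k < τ ω}.indicator 1 ω := by
  have hlower : ∑ k ∈ range (τ ω), {ω | k < τ ω}.indicator (1 : Ω → ℝ) ω = τ ω := by
    rw [sum_congr rfl fun k hk => Set.indicator_of_mem (s := {ω | k < τ ω})
      (mem_range.1 hk) (1 : Ω → ℝ)]
    simp
  have hupper : ∑ k ∈ Ico (τ ω) n, {ω | k < τ ω}.indicator (1 : Ω → ℝ) ω = 0 :=
    sum_eq_zero fun k hk => Set.indicator_of_notMem (not_lt.2 (mem_Ico.1 hk).1) 1
  rw [← sum_range_add_sum_Ico _ (mem_Icc.1 (hτ.1 ω)).2, hlower, hupper, add_zero]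

lemma stopped_eq_sum_indicator (hτ : IsStopRule X n τ) (ω : Ω) :
    X (τ ω) ω = ∑ j ∈ Icc 1 n, {ω | τ ω = j}.indicator (X j) ω := by
  rw [sum_eq_single_of_mem (f := fun j => {ω | τ ω = j}.indicator (X j) ω) (τ ω) (hτ.1 ω)
    fun j _ hj => Set.indicator_of_notMem (fun h => hj h.symm) _]
  exact (Set.indicator_of_mem (s := {ω | τ ω = τ ω}) rfl (X (τ ω))).symm

variable [MeasurableSpace Ω] {μ : Measure Ω}

lemma measurableSet_eq (hmeas : ∀ i, Measurable (X i)) (hτ : IsStopRule X n τ) (j : ℕ) :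
    MeasurableSet {ω | τ ω = j} := by
  by_cases hj : j ∈ Icc 1 n
  · exact priorSigma_le hmeas j _ (hτ.2 j hj)
  · convert MeasurableSet.empty
    ext ω
    exact iff_of_false (fun h => hj (h ▸ hτ.1 ω)) id

lemma integrable_stopped (hmeas : ∀ i, Measurable (X i)) (hτ : IsStopRule X n τ)
    (hint : ∀ j ∈ Icc 1 n, Integrable (X j) μ) :
    Integrable (fun ω => X (τ ω) ω) μ := by
  simp_rw [hτ.stopped_eq_sum_indicator]
  exact integrable_finsetSum _ fun j hj => (hint j hj).indicator (hτ.measurableSet_eq hmeas j)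

variable [IsFiniteMeasure μ]

lemma integrable_cast (hmeas : ∀ i, Measurable (X i)) (hτ : IsStopRule X n τ) :
    Integrable (fun ω => (τ ω : ℝ)) μ := by
  simp_rw [hτ.cast_eq_sum_indicator]
  exact integrable_finsetSum _ fun k hk => (integrable_const 1).indicator
    (priorSigma_le hmeas k _ (hτ.measurableSet_lt (mem_range.1 hk).le))

/-- Since `X ≥ 0`, `X τ ≤ ∑ k < n, 1{k < τ} X (k + 1)`, and `{k < τ}` is independent of
`X (k + 1)`, so each term has expectation `p P(k < τ)`. -/
lemma integral_stopped_le (hmeas : ∀ i, Measurable (X i))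
    (hindep : iIndepFun (fun i : Fin n => X (i.1 + 1)) μ)
    (hnonneg : ∀ j ∈ Icc 1 n, 0 ≤ᵐ[μ] X j) (hint : ∀ j ∈ Icc 1 n, Integrable (X j) μ)
    {p : ℝ} (hmean : ∀ j ∈ Icc 1 n, ∫ ω, X j ω ∂μ = p) (hτ : IsStopRule X n τ) :
    ∫ ω, X (τ ω) ω ∂μ ≤ p * ∫ ω, (τ ω : ℝ) ∂μ := by
  set R : ℕ → Set Ω := fun k => {ω | k < τ ω}
  have hR : ∀ k ∈ range n, MeasurableSet[priorSigma X k] (R k) :=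
    fun k hk => hτ.measurableSet_lt (mem_range.1 hk).le
  have hRm : ∀ k ∈ range n, MeasurableSet (R k) := fun k hk => priorSigma_le hmeas k _ (hR k hk)
  have hsucc : ∀ k ∈ range n, k + 1 ∈ Icc 1 n := fun k hk => by
    simp only [mem_range, mem_Icc] at hk ⊢; omega
  have hterm : ∀ k ∈ range n, ∫ ω, (R k).indicator (X (k + 1)) ω ∂μ = p * μ.real (R k) := by
    intro k hk
    have hind : IndepFun ((R k).indicator 1) (X (k + 1)) μ :=
      indepFun_of_measurable_priorSigma hmeas hindep (mem_range.1 hk)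
      (measurable_const.indicator (hR k hk) : Measurable[priorSigma X k] ((R k).indicator 1))
      measurable_id
    have hprod : (R k).indicator (X (k + 1)) = (R k).indicator 1 * X (k + 1) := by
      ext ω; by_cases hω : ω ∈ R k <;> simp [hω]
    rw [hprod, hind.integral_mul_eq_mul_integral
      ((measurable_const.indicator (hRm k hk)).aestronglyMeasurable)
      (hmeas _).aestronglyMeasurable, integral_indicator_one (hRm k hk), hmean _ (hsucc k hk),
      mul_comm]
  have hnonneg_all : ∀ᵐ ω ∂μ, ∀ j ∈ Icc 1 n, 0 ≤ X j ω :=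
    (Filter.eventually_all_finset _).2 hnonneg
  calc ∫ ω, X (τ ω) ω ∂μ ≤ ∫ ω, ∑ k ∈ range n, (R k).indicator (X (k + 1)) ω ∂μ := by
        refine integral_mono_of_nonneg ?_
          (integrable_finsetSum _ fun k hk => (hint _ (hsucc k hk)).indicator (hRm k hk)) ?_
        · filter_upwards [hnonneg_all] with ω hω using hω _ (hτ.1 ω)
        · filter_upwards [hnonneg_all] with ω hω
          obtain ⟨hτ1, hτn⟩ := mem_Icc.1 (hτ.1 ω)
          have hk : τ ω - 1 ∈ range n := mem_range.2 (by omega)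
          have hidx : τ ω - 1 + 1 = τ ω := by omega
          calc X (τ ω) ω = (R (τ ω - 1)).indicator (X (τ ω - 1 + 1)) ω := by
                rw [hidx, Set.indicator_of_mem
                  (show ω ∈ R (τ ω - 1) from show τ ω - 1 < τ ω by omega)]
            _ ≤ ∑ k ∈ range n, (R k).indicator (X (k + 1)) ω := single_le_sum
                (fun k hk => Set.indicator_nonneg (fun _ _ => hω _ (hsucc k hk)) _) hk
    _ = ∑ k ∈ range n, p * μ.real (R k) := by
        rw [integral_finsetSum _ fun k hk => (hint _ (hsucc k hk)).indicator (hRm k hk)]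
        exact sum_congr rfl hterm
    _ = p * ∫ ω, (τ ω : ℝ) ∂μ := by
        simp_rw [← mul_sum, hτ.cast_eq_sum_indicator]
        rw [integral_finsetSum _ fun k hk => (integrable_const 1).indicator (hRm k hk)]
        exact congrArg _ (sum_congr rfl fun k hk => (integral_indicator_one (hRm k hk)).symm)

end IsStopRule

lemma isStopRule_const {Ω : Type*} (Y : ℕ → Ω → ℝ) {n i : ℕ} (hi : i ∈ Icc 1 n) :
    IsStopRule Y n (fun _ => i) := by
  refine ⟨fun _ => hi, fun j _ => ?_⟩
  by_cases hij : i = j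
  · simp only [hij, Set.ofPred_true, MeasurableSet.univ]
  · simp only [hij, Set.ofPred_false, MeasurableSet.empty]

lemma Vn_eq_zero {Ω : Type*} [MeasurableSpace Ω] {μ : Measure Ω} [IsProbabilityMeasure μ]
    {n : ℕ} {X Y : ℕ → Ω → ℝ} (hmeas : ∀ i, Measurable (X i))
    (hindep : iIndepFun (fun i : Fin n => X (i.1 + 1)) μ)
    (hnonneg : ∀ j ∈ Icc 1 n, 0 ≤ᵐ[μ] X j) (hint : ∀ j ∈ Icc 1 n, Integrable (X j) μ)
    {c : ℝ} (hmean : ∀ j ∈ Icc 1 n, ∫ ω, X j ω ∂μ = c) (hY : ∀ i ω, Y i ω = X i ω - i * c)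
    (hn : 1 ≤ n) : Vn μ Y n = 0 := by
  have h1n : 1 ∈ Icc 1 n := mem_Icc.2 ⟨le_rfl, hn⟩
  refine IsGreatest.csSup_eq ⟨⟨fun _ => 1, isStopRule_const Y h1n, ?_⟩, ?_⟩
  · simp_rw [hY, Nat.cast_one, one_mul]
    rw [integral_sub (hint 1 h1n) (integrable_const c), hmean 1 h1n, integral_const, smul_eq_mul,
      probReal_univ, one_mul, sub_self]
  · rintro r ⟨τ, hτ, rfl⟩
    rw [isStopRule_sub_const (fun i => i * c) hY] at hτ
    have hwald := hτ.integral_stopped_le hmeas hindep hnonneg hint hmean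
    simp_rw [hY]
    rw [integral_sub (hτ.integrable_stopped hmeas hint) ((hτ.integrable_cast hmeas).mul_const c),
      integral_mul_const]
    linarith

section zeroOne

variable {Ω : Type*} [MeasurableSpace Ω] {μ : Measure Ω} {X : Ω → ℝ}

lemma ae_eq_zero_or_one_of_measure_eq [IsProbabilityMeasure μ] (hX : Measurable X) {p : ℝ}
    (h1 : μ {ω | X ω = 1} = ENNReal.ofReal p) (h0 : μ {ω | X ω = 0} = ENNReal.ofReal (1 - p)) :
    ∀ᵐ ω ∂μ, X ω = 0 ∨ X ω = 1 := by
  have hm0 : MeasurableSet {ω | X ω = 0} := hX (measurableSet_singleton 0)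
  have hm1 : MeasurableSet {ω | X ω = 1} := hX (measurableSet_singleton 1)
  have hdisj : Disjoint {ω | X ω = 0} {ω | X ω = 1} :=
    Set.disjoint_left.2 fun ω h0 h1 => zero_ne_one (h0.symm.trans h1)
  have hunion : μ ({ω | X ω = 0} ∪ {ω | X ω = 1}) = 1 := by
    refine le_antisymm prob_le_one ?_
    calc (1 : ENNReal) = ENNReal.ofReal (1 - p + p) := by rw [sub_add_cancel, ENNReal.ofReal_one]
      _ ≤ ENNReal.ofReal (1 - p) + ENNReal.ofReal p := ENNReal.ofReal_add_le
      _ = _ := by rw [measure_union hdisj hm1, h0, h1]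
  exact (ae_iff_measure_eq (p := fun ω => X ω = 0 ∨ X ω = 1) (hm0.union hm1).nullMeasurableSet).2
    (hunion.trans measure_univ.symm)

lemma ae_eq_indicator_of_ae_eq_zero_or_one (hbin : ∀ᵐ ω ∂μ, X ω = 0 ∨ X ω = 1) :
    X =ᵐ[μ] {ω | X ω = 1}.indicator 1 := by
  filter_upwards [hbin] with ω hω
  rcases hω with hω | hω
  · simp [hω]
  · simp [hω]

lemma integrable_of_ae_eq_zero_or_one [IsFiniteMeasure μ] (hX : Measurable X)
    (hbin : ∀ᵐ ω ∂μ, X ω = 0 ∨ X ω = 1) : Integrable X μ :=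
  ((integrable_const 1).indicator (hX (measurableSet_singleton 1))).congr
    (ae_eq_indicator_of_ae_eq_zero_or_one hbin).symm

lemma integral_of_ae_eq_zero_or_one (hX : Measurable X) (hbin : ∀ᵐ ω ∂μ, X ω = 0 ∨ X ω = 1) :
    ∫ ω, X ω ∂μ = μ.real {ω | X ω = 1} := by
  rw [integral_congr_ae (ae_eq_indicator_of_ae_eq_zero_or_one hbin),
    integral_indicator_one (show MeasurableSet {ω | X ω = 1} from hX (measurableSet_singleton 1))]

end zeroOne

/-- On a `{0, 1}`-valued path, `∏ j ≤ k, (1 - x j) * x (k + 1)` is the indicator that the first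
`1` sits at `k + 1`, and then `max_j (x j - j c) = 1 - (k + 1) c`; without any `1` the maximum is
`-c`, attained at `j = 1`. -/
lemma sSup_image_sub_mul_eq {n : ℕ} (hn : 1 ≤ n) {c : ℝ} (hc0 : 0 ≤ c) (hnc : n * c ≤ 1)
    {x : ℕ → ℝ} (hx : ∀ j ∈ Icc 1 n, x j = 0 ∨ x j = 1) :
    sSup ((fun j : ℕ => x j - j * c) '' Set.Icc 1 n) =
      -c + ∑ k ∈ range n, (∏ j ∈ Icc 1 k, (1 - x j)) * x (k + 1) * (1 - k * c) := by
  classical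
  by_cases hone : ∃ i, i ∈ Icc 1 n ∧ x i = 1
  · set i := Nat.find hone
    obtain ⟨hi, hxi⟩ : i ∈ Icc 1 n ∧ x i = 1 := Nat.find_spec hone
    obtain ⟨hi1, hin⟩ := mem_Icc.1 hi
    have hbefore : ∀ j, 1 ≤ j → j < i → x j = 0 := fun j hj1 hji =>
      (hx j (mem_Icc.2 ⟨hj1, by omega⟩)).resolve_right
        fun h => Nat.find_min hone hji ⟨mem_Icc.2 ⟨hj1, by omega⟩, h⟩
    have hic : (i : ℝ) * c ≤ 1 :=
      (mul_le_mul_of_nonneg_right (Nat.cast_le.2 hin) hc0).trans hnc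
    have hsup : sSup ((fun j : ℕ => x j - j * c) '' Set.Icc 1 n) = 1 - i * c := by
      refine IsGreatest.csSup_eq ⟨⟨i, Set.mem_Icc.2 ⟨hi1, hin⟩, by simp only [hxi]⟩, ?_⟩
      rintro _ ⟨j, ⟨hj1, hjn⟩, rfl⟩
      rcases lt_or_ge j i with hji | hij
      · have : (0 : ℝ) ≤ j * c := by positivity
        simp only [hbefore j hj1 hji]
        linarith
      · have hxj : x j ≤ 1 := by rcases hx j (mem_Icc.2 ⟨hj1, hjn⟩) with h | h <;> simp [h]
        have : (i : ℝ) * c ≤ j * c := mul_le_mul_of_nonneg_right (Nat.cast_le.2 hij) hc0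
        simp only
        linarith
    have hsum : ∑ k ∈ range n, (∏ j ∈ Icc 1 k, (1 - x j)) * x (k + 1) * (1 - k * c) =
        1 - ((i - 1 : ℕ) : ℝ) * c := by
      rw [sum_eq_single_of_mem (i - 1) (mem_range.2 (by omega))]
      · have hfirst : ∏ j ∈ Icc 1 (i - 1), (1 - x j) = 1 := prod_eq_one fun j hj => by
          obtain ⟨hj1, hji⟩ := mem_Icc.1 hj
          rw [hbefore j hj1 (by omega), sub_zero]
        rw [hfirst, Nat.sub_add_cancel hi1, hxi, one_mul, one_mul]
      · intro k hk hki
        rcases lt_or_gt_of_ne hki with hlt | hgt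
        · rw [hbefore (k + 1) (by omega) (by omega), mul_zero, zero_mul]
        · rw [prod_eq_zero (mem_Icc.2 ⟨hi1, by omega⟩) (by rw [hxi, sub_self]), zero_mul, zero_mul]
    rw [hsup, hsum, Nat.cast_sub hi1, Nat.cast_one]
    ring
  · push Not at hone
    have hzero : ∀ j ∈ Icc 1 n, x j = 0 := fun j hj => (hx j hj).resolve_right (hone j hj)
    have hsup : sSup ((fun j : ℕ => x j - j * c) '' Set.Icc 1 n) = -c := by
      refine IsGreatest.csSup_eq ⟨⟨1, Set.mem_Icc.2 ⟨le_rfl, hn⟩, ?_⟩, ?_⟩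
      · simp [hzero 1 (mem_Icc.2 ⟨le_rfl, hn⟩)]
      · rintro _ ⟨j, ⟨hj1, hjn⟩, rfl⟩
        have : c ≤ j * c := le_mul_of_one_le_left hc0 (Nat.one_le_cast.2 hj1)
        simp only [hzero j (mem_Icc.2 ⟨hj1, hjn⟩)]
        linarith
    rw [hsup, sum_eq_zero fun k hk => by
      rw [hzero (k + 1) (mem_Icc.2 ⟨by omega, mem_range.1 hk⟩), mul_zero, zero_mul], add_zero]

section product

variable {Ω : Type*} [MeasurableSpace Ω] {μ : Measure Ω} [IsProbabilityMeasure μ]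
  {X : ℕ → Ω → ℝ} {n : ℕ} {p : ℝ}

lemma integrable_prod_one_sub_and_integral_eq (hmeas : ∀ i, Measurable (X i))
    (hindep : iIndepFun (fun i : Fin n => X (i.1 + 1)) μ)
    (hint : ∀ j ∈ Icc 1 n, Integrable (X j) μ) (hmean : ∀ j ∈ Icc 1 n, ∫ ω, X j ω ∂μ = p) :
    ∀ k ≤ n, Integrable (fun ω => ∏ j ∈ Icc 1 k, (1 - X j ω)) μ ∧
      ∫ ω, ∏ j ∈ Icc 1 k, (1 - X j ω) ∂μ = (1 - p) ^ k := by
  intro k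
  induction k with
  | zero => simp
  | succ k ih =>
    intro hk
    obtain ⟨hint_k, hintegral_k⟩ := ih (by omega)
    have hk1 : k + 1 ∈ Icc 1 n := mem_Icc.2 ⟨by omega, hk⟩
    have hind : IndepFun (fun ω => ∏ j ∈ Icc 1 k, (1 - X j ω)) (fun ω => 1 - X (k + 1) ω) μ :=
      indepFun_of_measurable_priorSigma hmeas hindep (by omega)
        (measurable_prod_one_sub_priorSigma X k) (measurable_const.sub measurable_id)
    have hint_next : Integrable (fun ω => 1 - X (k + 1) ω) μ :=
      (integrable_const 1).sub (hint _ hk1)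
    simp_rw [prod_Icc_succ_top (by omega : 1 ≤ k + 1)]
    refine ⟨hind.integrable_mul hint_k hint_next, ?_⟩
    have hmul := hind.integral_mul_eq_mul_integral hint_k.aestronglyMeasurable
      hint_next.aestronglyMeasurable
    simp only [Pi.mul_apply] at hmul
    rw [hmul, hintegral_k, integral_sub (integrable_const 1) (hint _ hk1),
      hmean _ hk1, integral_const, probReal_univ, one_smul, pow_succ]

lemma integrable_prod_one_sub_mul_and_integral_eq (hmeas : ∀ i, Measurable (X i))
    (hindep : iIndepFun (fun i : Fin n => X (i.1 + 1)) μ)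
    (hint : ∀ j ∈ Icc 1 n, Integrable (X j) μ) (hmean : ∀ j ∈ Icc 1 n, ∫ ω, X j ω ∂μ = p)
    {k : ℕ} (hk : k < n) :
    Integrable (fun ω => (∏ j ∈ Icc 1 k, (1 - X j ω)) * X (k + 1) ω) μ ∧
      ∫ ω, (∏ j ∈ Icc 1 k, (1 - X j ω)) * X (k + 1) ω ∂μ = (1 - p) ^ k * p := by
  obtain ⟨hint_k, hintegral_k⟩ :=
    integrable_prod_one_sub_and_integral_eq hmeas hindep hint hmean k hk.le
  have hk1 : k + 1 ∈ Icc 1 n := mem_Icc.2 ⟨by omega, hk⟩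
  have hind : IndepFun (fun ω => ∏ j ∈ Icc 1 k, (1 - X j ω)) (X (k + 1)) μ :=
    indepFun_of_measurable_priorSigma hmeas hindep hk (measurable_prod_one_sub_priorSigma X k)
      measurable_id
  have hmul := hind.integral_mul_eq_mul_integral hint_k.aestronglyMeasurable
    (hmeas _).aestronglyMeasurable
  simp only [Pi.mul_apply] at hmul
  exact ⟨hind.integrable_mul hint_k (hint _ hk1), by rw [hmul, hintegral_k, hmean _ hk1]⟩

end product

lemma Mn_eq {Ω : Type*} [MeasurableSpace Ω] {μ : Measure Ω} [IsProbabilityMeasure μ]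
    {n : ℕ} {X Y : ℕ → Ω → ℝ} (hmeas : ∀ i, Measurable (X i))
    (hindep : iIndepFun (fun i : Fin n => X (i.1 + 1)) μ)
    (hbin : ∀ j ∈ Icc 1 n, ∀ᵐ ω ∂μ, X j ω = 0 ∨ X j ω = 1)
    (hint : ∀ j ∈ Icc 1 n, Integrable (X j) μ) {p : ℝ} (hmean : ∀ j ∈ Icc 1 n, ∫ ω, X j ω ∂μ = p)
    {c : ℝ} (hY : ∀ i ω, Y i ω = X i ω - i * c) (hn : 1 ≤ n) (hc0 : 0 ≤ c) (hnc : n * c ≤ 1) :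
    Mn μ Y n = -c + ∑ k ∈ range n, (1 - p) ^ k * p * (1 - k * c) := by
  have hterm := fun k (hk : k ∈ range n) =>
    integrable_prod_one_sub_mul_and_integral_eq hmeas hindep hint hmean (mem_range.1 hk)
  have hmax : (fun ω => sSup ((fun i => Y i ω) '' Set.Icc 1 n)) =ᵐ[μ] fun ω =>
      -c + ∑ k ∈ range n, (∏ j ∈ Icc 1 k, (1 - X j ω)) * X (k + 1) ω * (1 - k * c) := by
    filter_upwards [(Filter.eventually_all_finset _).2 hbin] with ω hω
    simp_rw [hY]
    exact sSup_image_sub_mul_eq hn hc0 hnc hω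
  rw [Mn, integral_congr_ae hmax, integral_add (integrable_const _)
      (integrable_finsetSum _ fun k hk => (hterm k hk).1.mul_const _),
    integral_finsetSum _ fun k hk => (hterm k hk).1.mul_const _, integral_const, probReal_univ,
    one_smul]
  exact congrArg _ (sum_congr rfl fun k hk => by rw [integral_mul_const, (hterm k hk).2])

lemma neg_add_sum_pow_mul (p : ℝ) (m : ℕ) :
    -p + ∑ k ∈ range m, (1 - p) ^ k * p * (1 - k * p) = (m - 1) * (1 - p) ^ m * p := by
  induction m with
  | zero => simp
  | succ m ih =>
    rw [sum_range_succ, ← add_assoc, ih]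
    push_cast
    ring

theorem stmt6
    {Ω : Type*} [MeasurableSpace Ω] (μ : Measure Ω) [IsProbabilityMeasure μ]
    (n : ℕ) (X : ℕ → Ω → ℝ)
    (hmeas : ∀ i, Measurable (X i))
    (hindep : iIndepFun (fun i : Fin n => X (i.1 + 1)) μ)
    (hident : ∀ i ∈ Set.Icc 1 n, IdentDistrib (X i) (X 1) μ μ)
    (c : ℝ) (Y : ℕ → Ω → ℝ) (hY : ∀ i ω, Y i ω = X i ω - i * c)
    (hn : 1 ≤ n) (hc : c = 1/((n:ℝ)+1))
    (h1 : μ {ω | X 1 ω = 1} = ENNReal.ofReal (1/((n:ℝ)+1)))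
    (h0 : μ {ω | X 1 ω = 0} = ENNReal.ofReal (1 - 1/((n:ℝ)+1))) :
    Mn μ Y n - Vn μ Y n = (((n:ℝ) - 1) * (1 - 1/((n:ℝ)+1)) ^ n / ((n:ℝ)+1)) := by
  have hc0 : 0 ≤ c := by rw [hc]; positivity
  have hnc : (n : ℝ) * c ≤ 1 := by
    rw [hc, mul_one_div, div_le_one (by positivity)]
    linarith
  have h1n : 1 ∈ Icc 1 n := mem_Icc.2 ⟨le_rfl, hn⟩
  have hbin : ∀ j ∈ Icc 1 n, ∀ᵐ ω ∂μ, X j ω = 0 ∨ X j ω = 1 := fun j hj =>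
    (hident j (mem_Icc.1 hj)).symm.ae_mem_snd (t := {0, 1}) (Set.toFinite _).measurableSet
      (ae_eq_zero_or_one_of_measure_eq (hmeas 1) h1 h0)
  have hint : ∀ j ∈ Icc 1 n, Integrable (X j) μ :=
    fun j hj => integrable_of_ae_eq_zero_or_one (hmeas j) (hbin j hj)
  have hmean : ∀ j ∈ Icc 1 n, ∫ ω, X j ω ∂μ = c := fun j hj => by
    rw [(hident j (mem_Icc.1 hj)).integral_eq, integral_of_ae_eq_zero_or_one (hmeas 1) (hbin 1 h1n),
      measureReal_def, h1, ENNReal.toReal_ofReal (hc ▸ hc0), hc]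
  have hnonneg : ∀ j ∈ Icc 1 n, 0 ≤ᵐ[μ] X j := fun j hj =>
    (hbin j hj).mono fun ω h => by rcases h with h | h <;> simp [h]
  rw [Mn_eq hmeas hindep hbin hint hmean hY hn hc0 hnc,
    Vn_eq_zero hmeas hindep hnonneg hint hmean hY hn,
    neg_add_sum_pow_mul, sub_zero, hc]
  ring
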